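/- Let (Ω, F, P) be a probability space, let ξ_1, …, ξ_n be independent real-valued random variables with finite second moments, and let b_1 ≤ b_2 ≤ … ≤ b_n be positive real numbers. Then for every ε > 0 and all integers 1 ≤ m < n, P( max_{m ≤ k ≤ n} | (1/b_k) · Σ_{i=1}^{k} (ξ_i − E ξ_i) | > ε ) ≤ ε^{−2} · ( (1/b_m²) · Σ_{i=1}^{m} E(ξ_i − E ξ_i)² + Σ_{i=m+1}^{n} E(ξ_i − E ξ_i)² / b_i² ). -/

import Mathlib

/-!
Write `η i = ξ i - E ξ i`, `S k = ∑_{i ≤ k} η i` and `d i = 1 / b (max i m)²`, which is antitone.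
Abel summation bounds `d k S_k²` by `Z k = ∑_{i ≤ k} d i (S_i² - S_{i-1}²)`, and `Z` is a
nonnegative submartingale for the natural filtration of `η`: since the centered increment `η i` is
independent of the past, `E[1_A (S_i² - S_{i-1}²)] = E[1_A η_i²] ≥ 0` for every past event `A`.
Doob's maximal inequality for `Z` bounds the probability by `ε⁻² E Z_n = ε⁻² ∑_{i ≤ n} d i E η_i²`,
which is the right-hand side.
-/

open MeasureTheory ProbabilityTheory Finset

lemma Antitone.mul_le_add_sum_mul_sub {d X : ℕ → ℝ} (hd : Antitone d) (hX : ∀ i, 0 ≤ X i)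
    (k : ℕ) : d k * X k ≤ d 0 * X 0 + ∑ i ∈ Icc 1 k, d i * (X i - X (i - 1)) := by
  induction k with
  | zero => simp
  | succ k ih =>
    rw [sum_Icc_succ_top (by omega), Nat.add_sub_cancel]
    have : d (k + 1) * X k ≤ d k * X k := mul_le_mul_of_nonneg_right (hd k.le_succ) (hX k)
    linarith

lemma antitone_one_div_sq_max {b : ℕ → ℝ} {m : ℕ} (hb_pos : 0 < b m)
    (hb_mono : MonotoneOn b (Set.Ici m)) : Antitone fun i => 1 / b (max i m) ^ 2 := by
  intro i j hij
  have hbi : 0 < b (max i m) :=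
    hb_pos.trans_le (hb_mono Set.self_mem_Ici (le_max_right i m) (le_max_right i m))
  have : b (max i m) ≤ b (max j m) :=
    hb_mono (le_max_right i m) (le_max_right j m) (max_le_max_right m hij)
  dsimp only
  gcongr

lemma sum_Icc_one_div_sq_max_mul (b v : ℕ → ℝ) {m n : ℕ} (hmn : m ≤ n) :
    ∑ i ∈ Icc 1 n, 1 / b (max i m) ^ 2 * v i =
      1 / b m ^ 2 * ∑ i ∈ Icc 1 m, v i + ∑ i ∈ Icc (m + 1) n, v i / b i ^ 2 := by
  have hIcc : ∀ k, Icc 1 k = Ioc 0 k := Icc_add_one_left_eq_Ioc 0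
  rw [hIcc, ← sum_Ioc_consecutive _ (Nat.zero_le m) hmn, ← hIcc, ← Icc_add_one_left_eq_Ioc,
    mul_sum]
  congr 1 <;> refine sum_congr rfl fun i hi => ?_ <;> rw [mem_Icc] at hi
  · rw [max_eq_right hi.2]
  · rw [max_eq_left (by omega), one_div_mul_eq_div]

namespace ProbabilityTheory

section Deterministic

variable {Ω : Type*} {η : ℕ → Ω → ℝ} {d : ℕ → ℝ}

def partialSum (η : ℕ → Ω → ℝ) (k : ℕ) (ω : Ω) : ℝ := ∑ i ∈ Icc 1 k, η i ω

lemma partialSum_succ (k : ℕ) (ω : Ω) :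
    partialSum η (k + 1) ω = partialSum η k ω + η (k + 1) ω := by
  simp [partialSum, sum_Icc_succ_top]

def hajekRenyiProcess (d : ℕ → ℝ) (η : ℕ → Ω → ℝ) (k : ℕ) (ω : Ω) : ℝ :=
  ∑ i ∈ Icc 1 k, d i * (partialSum η i ω ^ 2 - partialSum η (i - 1) ω ^ 2)

lemma hajekRenyiProcess_succ (k : ℕ) (ω : Ω) :
    hajekRenyiProcess d η (k + 1) ω = hajekRenyiProcess d η k ω +
      d (k + 1) * (partialSum η (k + 1) ω ^ 2 - partialSum η k ω ^ 2) := by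
  simp [hajekRenyiProcess, sum_Icc_succ_top]

lemma mul_partialSum_sq_le_hajekRenyiProcess (hd : Antitone d) (k : ℕ) (ω : Ω) :
    d k * partialSum η k ω ^ 2 ≤ hajekRenyiProcess d η k ω := by
  simpa [hajekRenyiProcess, partialSum] using
    hd.mul_le_add_sum_mul_sub (fun i => sq_nonneg (partialSum η i ω)) k

end Deterministic

variable {Ω : Type*} [MeasurableSpace Ω] {P : Measure Ω} {η : ℕ → Ω → ℝ}

lemma stronglyAdapted_partialSum (hη : ∀ i, StronglyMeasurable (η i)) :
    StronglyAdapted (Filtration.natural η hη) (partialSum η) := fun _ =>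
  Finset.stronglyMeasurable_fun_sum _ fun _ hi =>
    (Filtration.stronglyAdapted_natural hη).stronglyMeasurable_le (mem_Icc.1 hi).2

lemma stronglyAdapted_hajekRenyiProcess (hη : ∀ i, StronglyMeasurable (η i)) (d : ℕ → ℝ) :
    StronglyAdapted (Filtration.natural η hη) (hajekRenyiProcess d η) := by
  intro k
  have hS : ∀ {i}, i ≤ k → StronglyMeasurable[Filtration.natural η hη k] (partialSum η i) :=
    (stronglyAdapted_partialSum hη).stronglyMeasurable_le
  refine Finset.stronglyMeasurable_fun_sum _ fun i hi => ?_
  have hik := (mem_Icc.1 hi).2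
  exact (((hS hik).pow 2).sub ((hS ((i.sub_le 1).trans hik)).pow 2)).const_mul (d i)

lemma memLp_partialSum (hL2 : ∀ i, MemLp (η i) 2 P) (k : ℕ) : MemLp (partialSum η k) 2 P :=
  memLp_finsetSum (Icc 1 k) fun i _ => hL2 i

lemma integrable_hajekRenyiProcess (hL2 : ∀ i, MemLp (η i) 2 P) (d : ℕ → ℝ) (k : ℕ) :
    Integrable (hajekRenyiProcess d η k) P :=
  integrable_finsetSum _ fun i _ =>
    (((memLp_partialSum hL2 i).integrable_sq).sub
      (memLp_partialSum hL2 (i - 1)).integrable_sq).const_mul (d i)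

lemma iIndepFun.integral_mul_eq_zero_of_lt (hind : iIndepFun η P)
    (hη : ∀ i, StronglyMeasurable (η i)) {i j : ℕ} (hij : i < j) (hcent : ∫ ω, η j ω ∂P = 0)
    {f : Ω → ℝ} (hf : StronglyMeasurable[Filtration.natural η hη i] f) :
    ∫ ω, f ω * η j ω ∂P = 0 := by
  have hfη : f ⟂ᵢ[P] η j := by
    rw [IndepFun_iff_Indep]
    exact indep_of_indep_of_le_left (hind.indep_comap_natural_of_lt hη hij).symm
      hf.measurable.comap_le
  rw [hfη.integral_fun_mul_eq_mul_integral
    (hf.mono ((Filtration.natural η hη).le i)).aestronglyMeasurable (hη j).aestronglyMeasurable,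
    hcent, mul_zero]

section Independent

variable (hind : iIndepFun η P) (hη : ∀ i, StronglyMeasurable (η i))
  (hL2 : ∀ i, MemLp (η i) 2 P) (hcent : ∀ i, ∫ ω, η i ω ∂P = 0)
include hind hη hL2 hcent

lemma setIntegral_partialSum_sq_succ_sub (k : ℕ) {s : Set Ω}
    (hs : MeasurableSet[Filtration.natural η hη k] s) :
    ∫ ω in s, (partialSum η (k + 1) ω ^ 2 - partialSum η k ω ^ 2) ∂P =
      ∫ ω in s, η (k + 1) ω ^ 2 ∂P := by
  have hcross : ∫ ω in s, partialSum η k ω * η (k + 1) ω ∂P = 0 := by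
    rw [← integral_indicator ((Filtration.natural η hη).le k s hs)]
    simp_rw [Set.indicator_mul_left]
    exact hind.integral_mul_eq_zero_of_lt hη k.lt_succ_self (hcent _)
      ((stronglyAdapted_partialSum hη k).indicator hs)
  have hint_cross : Integrable (fun ω => partialSum η k ω * η (k + 1) ω) P :=
    (memLp_partialSum hL2 k).integrable_mul (hL2 (k + 1))
  have hexpand : ∀ ω, partialSum η (k + 1) ω ^ 2 - partialSum η k ω ^ 2 =
      2 * (partialSum η k ω * η (k + 1) ω) + η (k + 1) ω ^ 2 := fun ω => by
    rw [partialSum_succ]; ring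
  simp_rw [hexpand]
  rw [integral_add (hint_cross.const_mul 2).integrableOn (hL2 (k + 1)).integrable_sq.integrableOn,
    integral_const_mul, hcross, mul_zero, zero_add]

lemma setIntegral_hajekRenyiProcess_succ (d : ℕ → ℝ) (k : ℕ) {s : Set Ω}
    (hs : MeasurableSet[Filtration.natural η hη k] s) :
    ∫ ω in s, hajekRenyiProcess d η (k + 1) ω ∂P =
      ∫ ω in s, hajekRenyiProcess d η k ω ∂P + d (k + 1) * ∫ ω in s, η (k + 1) ω ^ 2 ∂P := by
  have hS := memLp_partialSum hL2 (P := P)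
  have hincr : Integrable
      (fun ω => d (k + 1) * (partialSum η (k + 1) ω ^ 2 - partialSum η k ω ^ 2)) P :=
    (((hS (k + 1)).integrable_sq).sub (hS k).integrable_sq).const_mul _
  simp_rw [hajekRenyiProcess_succ]
  rw [integral_add (integrable_hajekRenyiProcess hL2 d k).integrableOn hincr.integrableOn,
    integral_const_mul, setIntegral_partialSum_sq_succ_sub hind hη hL2 hcent k hs]

lemma submartingale_hajekRenyiProcess [IsFiniteMeasure P] {d : ℕ → ℝ} (hd : 0 ≤ d) :
    Submartingale (hajekRenyiProcess d η) (Filtration.natural η hη) P := by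
  refine submartingale_of_setIntegral_le_succ (stronglyAdapted_hajekRenyiProcess hη d)
    (integrable_hajekRenyiProcess hL2 d) fun k s hs => ?_
  rw [setIntegral_hajekRenyiProcess_succ hind hη hL2 hcent d k hs]
  exact le_add_of_nonneg_right (mul_nonneg (hd (k + 1)) (integral_nonneg fun ω => sq_nonneg _))

lemma integral_hajekRenyiProcess (d : ℕ → ℝ) (n : ℕ) :
    ∫ ω, hajekRenyiProcess d η n ω ∂P = ∑ i ∈ Icc 1 n, d i * ∫ ω, η i ω ^ 2 ∂P := by
  induction n with
  | zero => simp [hajekRenyiProcess]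
  | succ n ih =>
    have := setIntegral_hajekRenyiProcess_succ hind hη hL2 hcent d n MeasurableSet.univ
    rw [setIntegral_univ, setIntegral_univ, setIntegral_univ] at this
    rw [this, ih, sum_Icc_succ_top (by omega)]

theorem measure_exists_le_mul_partialSum_sq_le [IsFiniteMeasure P] {d : ℕ → ℝ}
    (hd : Antitone d) (hd0 : 0 ≤ d) {t : ℝ} (ht : 0 < t) (n : ℕ) :
    P {ω | ∃ k ≤ n, t ≤ d k * partialSum η k ω ^ 2} ≤
      ENNReal.ofReal (t⁻¹ * ∑ i ∈ Icc 1 n, d i * ∫ ω, η i ω ^ 2 ∂P) := by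
  set Z := hajekRenyiProcess d η
  have hdom : ∀ k ω, d k * partialSum η k ω ^ 2 ≤ Z k ω :=
    mul_partialSum_sq_le_hajekRenyiProcess hd
  have hZ0 : 0 ≤ Z := fun k ω => (mul_nonneg (hd0 k) (sq_nonneg _)).trans (hdom k ω)
  set M := {ω | (t.toNNReal : ℝ) ≤ (range (n + 1)).sup' nonempty_range_add_one fun k => Z k ω}
  have hsub : {ω | ∃ k ≤ n, t ≤ d k * partialSum η k ω ^ 2} ⊆ M := by
    rintro ω ⟨k, hk, hle⟩
    rw [Set.mem_ofPred_eq, Real.coe_toNNReal _ ht.le]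
    exact (hle.trans (hdom k ω)).trans (le_sup' (fun k => Z k ω) (mem_range.2 (by omega)))
  have hdoob : t.toNNReal * P M ≤ ENNReal.ofReal (∫ ω, Z n ω ∂P) :=
    (maximal_ineq (submartingale_hajekRenyiProcess hind hη hL2 hcent hd0) hZ0 n).trans
      (ENNReal.ofReal_le_ofReal (setIntegral_le_integral
        (integrable_hajekRenyiProcess hL2 d n) (Filter.Eventually.of_forall (hZ0 n))))
  rw [integral_hajekRenyiProcess hind hη hL2 hcent] at hdoob
  rw [ENNReal.ofReal_mul (inv_nonneg.2 ht.le), ENNReal.ofReal_inv_of_pos ht, mul_comm,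
    ← div_eq_mul_inv, ENNReal.le_div_iff_mul_le (by simp [ht]) (by simp)]
  calc P _ * ENNReal.ofReal t ≤ P M * ENNReal.ofReal t := by gcongr
    _ ≤ _ := by rwa [mul_comm]

end Independent

end ProbabilityTheory

/-- **The Hájek–Rényi maximal inequality.** For independent real random variables
`ξ 1, …, ξ n` with finite second moments and positive nondecreasing weights
`b 1 ≤ … ≤ b n`, the probability that the weighted centered partial sums exceed `ε`
at some index `k ∈ [m, n]` is bounded by `ε⁻² (b m⁻² ∑_{i≤m} Var + ∑_{m<i≤n} Var/b i²)`. -/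
theorem hajek_renyi_inequality
    {Ω : Type*} [MeasurableSpace Ω] (P : Measure Ω) [IsProbabilityMeasure P]
    (ξ : ℕ → Ω → ℝ) (b : ℕ → ℝ)
    (hmeas : ∀ i, Measurable (ξ i))
    (hL2 : ∀ i, MemLp (ξ i) 2 P)
    (hindep : iIndepFun ξ P)
    (hb_pos : ∀ i, 1 ≤ i → 0 < b i)
    (hb_mono : ∀ i j, 1 ≤ i → i ≤ j → b i ≤ b j)
    (ε : ℝ) (hε : 0 < ε) (m n : ℕ) (hm : 1 ≤ m) (hmn : m < n) :
    P {ω | ∃ k, m ≤ k ∧ k ≤ n ∧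
        ε < |(1 / b k) * ∑ i ∈ Finset.Icc 1 k, (ξ i ω - ∫ x, ξ i x ∂P)|} ≤
      ENNReal.ofReal (ε⁻¹ ^ 2 *
        ((1 / (b m) ^ 2) * ∑ i ∈ Finset.Icc 1 m, ∫ x, (ξ i x - ∫ y, ξ i y ∂P) ^ 2 ∂P
          + ∑ i ∈ Finset.Icc (m + 1) n,
              (∫ x, (ξ i x - ∫ y, ξ i y ∂P) ^ 2 ∂P) / (b i) ^ 2)) := by
  set η : ℕ → Ω → ℝ := fun i ω => ξ i ω - ∫ x, ξ i x ∂P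
  have hd : Antitone fun i => 1 / b (max i m) ^ 2 := antitone_one_div_sq_max (hb_pos m hm)
    fun i hi j _ hij => hb_mono i j (hm.trans hi) hij
  have hind : iIndepFun η P := hindep.comp _ fun i => measurable_id.sub_const _
  have hcent : ∀ i, ∫ ω, η i ω ∂P = 0 := fun i => by
    simp [η, integral_sub ((hL2 i).integrable one_le_two) (integrable_const _)]
  have hevent : {ω | ∃ k, m ≤ k ∧ k ≤ n ∧ ε < |(1 / b k) * partialSum η k ω|} ⊆
      {ω | ∃ k ≤ n, ε ^ 2 ≤ 1 / b (max k m) ^ 2 * partialSum η k ω ^ 2} := by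
    rintro ω ⟨k, hmk, hkn, hk⟩
    have hsq := (sq_lt_sq₀ hε.le (abs_nonneg _)).2 hk
    rw [sq_abs, mul_pow, one_div_pow] at hsq
    exact ⟨k, hkn, by rw [max_eq_left hmk]; exact hsq.le⟩
  calc _ ≤ _ := measure_mono hevent
    _ ≤ _ := measure_exists_le_mul_partialSum_sq_le hind
        (fun i => ((hmeas i).sub_const _).stronglyMeasurable) (fun i => (hL2 i).sub (memLp_const _))
        hcent hd (fun i => by positivity) (by positivity) n
    _ = _ := by rw [sum_Icc_one_div_sq_max_mul b _ hmn.le, inv_pow]
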